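/- arXiv:1112.1226 — 9 statements merged into one kernel-verified Lean document; each statement's English description precedes it below -/
import Mathlib

section
/- Let G : (0,∞) → ℝ be a Borel measurable function such that for every x > 0 there exists a set E_x ⊆ (0,∞) of Lebesgue measure zero with G(x·y) = G(y) for all y ∈ (0,∞) \ E_x. Then there exists a constant κ ∈ ℝ such that G(u) = κ for Lebesgue-almost all u ∈ (0,∞). -/
open MeasureTheory Set

theorem stmt_0 (G : ℝ → ℝ) (hG : Measurable G)
    (h : ∀ x : ℝ, 0 < x → ∃ E : Set ℝ, E ⊆ Ioi 0 ∧ volume E = 0 ∧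
      ∀ y : ℝ, 0 < y → y ∉ E → G (x * y) = G y) :
    ∃ κ : ℝ, ∀ᵐ u : ℝ ∂volume, u ∈ Ioi (0 : ℝ) → G u = κ := by
  set S : Set (ℝ × ℝ) := {p | 0 < p.1 ∧ 0 < p.2 ∧ G (p.1 * p.2) ≠ G p.2} with hS
  have hSm : MeasurableSet S := by
    have h1 : Measurable fun p : ℝ × ℝ => G (p.1 * p.2) :=
      hG.comp (measurable_fst.mul measurable_snd)
    have h2 : Measurable fun p : ℝ × ℝ => G p.2 := hG.comp measurable_snd
    have hSeq : S = (fun p : ℝ × ℝ => p.1) ⁻¹' Ioi 0 ∩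
        ((fun p : ℝ × ℝ => p.2) ⁻¹' Ioi 0 ∩ {p : ℝ × ℝ | G (p.1 * p.2) - G p.2 ≠ 0}) := by
      ext p; simp [hS, sub_ne_zero]
    rw [hSeq]
    exact (measurable_fst measurableSet_Ioi).inter
      ((measurable_snd measurableSet_Ioi).inter
        (((h1.sub h2) (measurableSet_singleton 0)).compl))
  have hS0 : (volume : Measure (ℝ × ℝ)) S = 0 := by
    rw [Measure.volume_eq_prod, Measure.measure_prod_null hSm]
    filter_upwards with x
    by_cases hx : 0 < x
    · obtain ⟨E, hE₁, hE₂, hE₃⟩ := h x hx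
      refine measure_mono_null (fun y hy => ?_) hE₂
      obtain ⟨_, hy2, hy3⟩ := hy
      by_contra hyE
      exact hy3 (hE₃ y hy2 hyE)
    · have : Prod.mk x ⁻¹' S = ∅ := by
        ext y; simp only [mem_preimage, hS, mem_setOf_eq, mem_empty_iff_false, iff_false]
        exact fun hc => hx hc.1
      simp [this]
  -- swap to get: for a.e. y, the x-slice is null
  have hS0' : (volume : Measure (ℝ × ℝ)) (Prod.swap ⁻¹' S) = 0 := by
    have := Measure.measurePreserving_swap (μ := (volume : Measure ℝ)) (ν := (volume : Measure ℝ))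
    rw [Measure.volume_eq_prod] at hS0 ⊢
    rw [← this.map_eq, Measure.map_apply measurable_swap hSm] at hS0
    exact hS0
  have hae : ∀ᵐ y : ℝ ∂volume, volume {x : ℝ | 0 < x ∧ 0 < y ∧ G (x * y) ≠ G y} = 0 := by
    rw [Measure.volume_eq_prod] at hS0'
    have := Measure.measure_ae_null_of_prod_null hS0'
    filter_upwards [this] with y hy
    have : Prod.mk y ⁻¹' (Prod.swap ⁻¹' S) = {x : ℝ | 0 < x ∧ 0 < y ∧ G (x * y) ≠ G y} := by
      ext x; simp [hS, and_left_comm]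
    rw [← this]; exact hy
  -- pick a good y₀ > 0
  have hpos : (volume : Measure ℝ) (Ioi (0 : ℝ)) ≠ 0 := by simp
  obtain ⟨y₀, hy₀pos, hy₀⟩ : ∃ y₀ : ℝ, 0 < y₀ ∧
      volume {x : ℝ | 0 < x ∧ 0 < y₀ ∧ G (x * y₀) ≠ G y₀} = 0 := by
    have hev := Filter.Eventually.and (ae_restrict_of_ae (μ := volume) (s := Ioi 0) hae)
      (ae_restrict_mem measurableSet_Ioi)
    haveI : (ae (volume.restrict (Ioi (0:ℝ)))).NeBot := by
      rw [ae_neBot, Ne, Measure.restrict_eq_zero]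
      exact hpos
    obtain ⟨y₀, h1, h2⟩ := hev.exists
    exact ⟨y₀, h2, h1⟩
  refine ⟨G y₀, ?_⟩
  -- the bad set B pulls back into the null slice via u ↦ u * y₀⁻¹
  set A : Set ℝ := {x : ℝ | 0 < x ∧ 0 < y₀ ∧ G (x * y₀) ≠ G y₀} with hA
  have hB : {u : ℝ | 0 < u ∧ G u ≠ G y₀} ⊆ (· * y₀⁻¹) ⁻¹' A := by
    intro u hu
    obtain ⟨hu1, hu2⟩ := hu
    refine ⟨mul_pos hu1 (inv_pos.mpr hy₀pos), hy₀pos, ?_⟩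
    rw [mul_assoc, inv_mul_cancel₀ hy₀pos.ne', mul_one]
    exact hu2
  have hBnull : volume {u : ℝ | 0 < u ∧ G u ≠ G y₀} = 0 := by
    refine measure_mono_null hB ?_
    rw [Real.volume_preimage_mul_right (inv_ne_zero hy₀pos.ne'), hy₀, mul_zero]
  rw [ae_iff]
  refine measure_mono_null (fun u hu => ?_) hBnull
  simp only [mem_setOf_eq, not_forall] at hu ⊢
  exact ⟨hu.1, hu.2⟩
end

section
/- Suppose a, b, c : (0,∞) → ℝ are Borel measurable and there exists a set N ⊆ (0,∞)² of two-dimensional Lebesgue measure zero such that a(x) + b(y) = c(x+y) for all (x,y) ∈ (0,∞)² \ N. Then there exist real constants λ, α, β such that a(x) = λx + α, b(x) = λx + β, and c(x) = λx + α + β for Lebesgue-almost all x ∈ (0,∞). -/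
/-!
Fubini along the lines `x + y = s` shows that for almost every `s`, `a x + b (s - x) = c s` for
almost every `x ∈ (0, s)`. Comparing `s` with `s + d` gives `b (u + d) - b u = c (s + d) - c s` for
almost every `u < s`, and a function of `u` that agrees almost everywhere on the triangle
`0 < u < s` with a function of `s` is almost everywhere constant; so `b` has almost-everywhere
increments `φ d`. These are additive in `d`, and bounded for `d ∈ (0, 1]` because `b` is bounded on
a set `A ⊆ (0, 4)` so large that `A` meets `A - d` in positive measure; hence `φ d = λ d`. Then
`b - λ x` is almost everywhere translation invariant, hence constant, and the triangle argument once
more makes `a - λ x` and `c - λ x` constant.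
-/

open MeasureTheory Set Filter Topology

lemma exists_mem_Ioo_of_ae {p : ℝ → Prop} (h : ∀ᵐ x, p x) {A B : ℝ} (hAB : A < B) :
    ∃ x ∈ Ioo A B, p x :=
  Measure.exists_mem_of_measure_ne_zero_of_ae (by simpa [Real.volume_Ioo] using hAB)
    (ae_restrict_of_ae h)

lemma ae_comp_add_right {p : ℝ → Prop} (h : ∀ᵐ x, p x) (d : ℝ) : ∀ᵐ x, p (x + d) :=
  (measurePreserving_add_right volume d).quasiMeasurePreserving.ae h

lemma ae_comp_sub_left {p : ℝ → Prop} (h : ∀ᵐ x, p x) (s : ℝ) : ∀ᵐ x, p (s - x) :=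
  (Measure.measurePreserving_sub_left volume s).quasiMeasurePreserving.ae h

lemma ae_ae_sub_of_ae_prod {P : ℝ → ℝ → Prop} (h : ∀ᵐ z : ℝ × ℝ, P z.1 z.2) :
    ∀ᵐ s, ∀ᵐ x, P x (s - x) :=
  Measure.ae_ae_of_ae_prod
    ((measurePreserving_prod_sub_swap volume volume).quasiMeasurePreserving.ae h)

lemma exists_ae_eq_of_ae_ae_Ioo {f κ : ℝ → ℝ}
    (h : ∀ᵐ s, 0 < s → ∀ᵐ u, 0 < u → u < s → f u = κ s) :
    ∃ k, (∀ᵐ u, 0 < u → f u = k) ∧ ∀ᵐ s, 0 < s → κ s = k := by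
  have hex : ∀ n : ℕ, ∃ s, (n : ℝ) < s ∧ (0 < s → ∀ᵐ u, 0 < u → u < s → f u = κ s) :=
    fun n ↦ let ⟨s, hs, hfs⟩ := exists_mem_Ioo_of_ae h (lt_add_one (n : ℝ)); ⟨s, hs.1, hfs⟩
  choose s hns hs using hex
  have hs0 : ∀ n, 0 < s n := fun n ↦ (Nat.cast_nonneg n).trans_lt (hns n)
  have hκ : ∀ t, 0 < t → (∀ᵐ u, 0 < u → u < t → f u = κ t) → κ t = κ (s 0) := by
    intro t ht hft
    obtain ⟨u, hu, h1, h2⟩ := exists_mem_Ioo_of_ae (hft.and (hs 0 (hs0 0))) (lt_min ht (hs0 0))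
    rw [← h1 hu.1 (hu.2.trans_le (min_le_left _ _)), h2 hu.1 (hu.2.trans_le (min_le_right _ _))]
  refine ⟨κ (s 0), ?_, h.mono fun t ht ht0 ↦ hκ t ht0 (ht ht0)⟩
  filter_upwards [ae_all_iff.2 fun n ↦ hs n (hs0 n)] with u hu hu0
  obtain ⟨n, hn⟩ := exists_nat_gt u
  rw [hu n hu0 (hn.trans (hns n)), hκ _ (hs0 n) (hs n (hs0 n))]

lemma exists_ae_eq_affine_of_ae_add_eq {g : ℝ → ℝ} (hg : Measurable g) {lam : ℝ}
    (h : ∀ d, 0 < d → ∀ᵐ u, 0 < u → g (u + d) = g u + lam * d) :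
    ∃ β, ∀ᵐ t, 0 < t → g t = lam * t + β := by
  set F := fun t ↦ g t - lam * t
  have hmeas : MeasurableSet {z : ℝ × ℝ | 0 < z.1 → 0 < z.2 → F (z.2 + z.1) = F z.2} := by
    measurability
  have hprod : ∀ᵐ z : ℝ × ℝ, 0 < z.1 → 0 < z.2 → F (z.2 + z.1) = F z.2 := by
    refine (Measure.ae_prod_iff_ae_ae hmeas).2 (ae_of_all _ fun d ↦ ?_)
    refine eventually_imp_distrib_left.2 fun hd ↦ (h d hd).mono fun u hu hu0 ↦ ?_
    simp only [F, hu hu0]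
    ring
  obtain ⟨β, -, hβ⟩ := exists_ae_eq_of_ae_ae_Ioo (f := F) (κ := F) (by
    filter_upwards [ae_ae_sub_of_ae_prod (P := fun d u ↦ 0 < d → 0 < u → F (u + d) = F u) hprod]
      with s hs _
    filter_upwards [ae_comp_sub_left hs s] with u hu hu0 hus
    simpa using (hu (sub_pos.2 hus) (by simpa using hu0)).symm)
  exact ⟨β, hβ.mono fun t ht ht0 ↦ by linarith [ht ht0]⟩

section Increments

variable {g φ ψ : ℝ → ℝ} {K : ℝ}

lemma measure_inter_preimage_add_ne_zero {A : Set ℝ} (hA : MeasurableSet A) {p q t : ℝ}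
    (ht : 0 ≤ t) (hApq : A ⊆ Ioo p q) (hvol : ENNReal.ofReal (q - p + t) < volume A + volume A) :
    volume (A ∩ (· + t) ⁻¹' A) ≠ 0 := by
  intro h0
  have hsub : A ∪ (· + t) ⁻¹' A ⊆ Ioo (p - t) q := by
    rintro x (hx | hx)
    · exact ⟨by linarith [(hApq hx).1], (hApq hx).2⟩
    · exact ⟨by linarith [(hApq hx).1], by linarith [(hApq hx).2]⟩
  have hunion := measure_union_add_inter (μ := volume) A (hA.preimage (measurable_add_const t))
  rw [h0, add_zero, (measurePreserving_add_right volume t).measure_preimage hA.nullMeasurableSet]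
    at hunion
  have := (measure_mono hsub).trans_eq (Real.volume_Ioo (a := p - t) (b := q))
  rw [hunion, sub_sub_eq_add_sub, add_sub_right_comm] at this
  exact this.not_gt hvol

lemma exists_bound_of_ae_add_eq (hg : Measurable g)
    (h : ∀ d, 0 < d → ∀ᵐ u, 0 < u → g (u + d) = g u + φ d) :
    ∃ K, ∀ t ∈ Ioc (0 : ℝ) 1, |φ t| ≤ K := by
  set A : ℕ → Set ℝ := fun n ↦ Ioo 0 4 ∩ {u | |g u| ≤ n}
  have hA : ∀ n, MeasurableSet (A n) := fun n ↦
    measurableSet_Ioo.inter (measurableSet_le hg.abs measurable_const)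
  obtain ⟨n, hn⟩ : ∃ n, ENNReal.ofReal 5 < volume (A n) + volume (A n) := by
    have hmono : Monotone A := fun i j hij u ⟨hu, hgu⟩ ↦
      ⟨hu, (show |g u| ≤ i from hgu).trans (Nat.cast_le.2 hij)⟩
    have hunion : ⋃ n, A n = Ioo 0 4 := by
      refine subset_antisymm (iUnion_subset fun n ↦ inter_subset_left) fun u hu ↦ ?_
      obtain ⟨n, hn⟩ := exists_nat_ge |g u|
      exact mem_iUnion.2 ⟨n, hu, hn⟩
    have hlim := tendsto_measure_iUnion_atTop (μ := volume) hmono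
    rw [hunion, Real.volume_Ioo] at hlim
    have h58 : ENNReal.ofReal 5 < ENNReal.ofReal (4 - 0) + ENNReal.ofReal (4 - 0) := by
      rw [← ENNReal.ofReal_add] <;> norm_num
    exact ((hlim.add hlim).eventually (eventually_gt_nhds h58)).exists
  refine ⟨2 * n, fun t ht ↦ ?_⟩
  have hvol : ENNReal.ofReal (4 - 0 + t) < volume (A n) + volume (A n) :=
    (ENNReal.ofReal_le_ofReal (by linarith [ht.2])).trans_lt hn
  obtain ⟨u, ⟨hu, hut⟩, hgu⟩ := Measure.exists_mem_of_measure_ne_zero_of_ae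
    (measure_inter_preimage_add_ne_zero (hA n) ht.1.le inter_subset_left hvol)
    (ae_restrict_of_ae (h t ht.1))
  have hgu_le : |g u| ≤ n := hu.2
  have hgut_le : |g (u + t)| ≤ n := hut.2
  rw [show φ t = g (u + t) - g u by linarith [hgu hu.1.1]]
  calc |g (u + t) - g u| ≤ |g (u + t)| + |g u| := abs_sub _ _
    _ ≤ 2 * n := by linarith

lemma map_add_of_ae_add_eq (h : ∀ d, 0 < d → ∀ᵐ u, 0 < u → g (u + d) = g u + φ d)
    {d e : ℝ} (hd : 0 < d) (he : 0 < e) : φ (d + e) = φ d + φ e := by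
  obtain ⟨u, hu, h1, h2, h3⟩ := exists_mem_Ioo_of_ae
    ((h d hd).and ((h (d + e) (add_pos hd he)).and (ae_comp_add_right (h e he) d))) zero_lt_one
  have := h3 (by linarith [hu.1])
  rw [add_assoc] at this
  linarith [h1 hu.1, h2 hu.1]

lemma map_natCast_add_one_mul (hadd : ∀ d e, 0 < d → 0 < e → ψ (d + e) = ψ d + ψ e) (n : ℕ)
    {s : ℝ} (hs : 0 < s) :
    ψ ((n + 1) * s) = (n + 1) * ψ s := by
  induction n with
  | zero => simp
  | succ k ih =>
    push_cast
    rw [add_one_mul _ s, hadd _ _ (by positivity) hs, ih]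
    ring

lemma eq_zero_of_add_of_bounded
    (hadd : ∀ d e, 0 < d → 0 < e → ψ (d + e) = ψ d + ψ e) (hK : ∀ t ∈ Ioc (0 : ℝ) 1, |ψ t| ≤ K)
    (h1 : ψ 1 = 0) {t : ℝ} (ht : 0 < t) : ψ t = 0 := by
  have hbound : ∀ n : ℕ, (n + 1) * |ψ t| ≤ K := by
    intro n
    set m : ℕ := ⌊(n + 1) * t⌋₊ + 1
    set r : ℝ := m - (n + 1) * t
    have hr : r ∈ Ioc (0 : ℝ) 1 := by
      have := Nat.lt_floor_add_one ((n + 1) * t)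
      have := Nat.floor_le (by positivity : (0 : ℝ) ≤ (n + 1) * t)
      constructor <;> simp only [r, m] <;> push_cast <;> linarith
    have hm : ψ m = 0 := by
      have := map_natCast_add_one_mul hadd (m - 1) one_pos
      rwa [Nat.cast_sub (by omega), Nat.cast_one, sub_add_cancel, mul_one, h1, mul_zero] at this
    have hsplit : ψ m = (n + 1) * ψ t + ψ r := by
      rw [← map_natCast_add_one_mul hadd n ht, ← hadd _ _ (by positivity) hr.1, add_sub_cancel]
    rw [← abs_of_pos (by positivity : (0 : ℝ) < n + 1), ← abs_mul,
      show (n + 1) * ψ t = -ψ r by linarith, abs_neg]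
    exact hK r hr
  by_contra hne
  obtain ⟨n, hn⟩ := exists_nat_gt (K / |ψ t|)
  rw [div_lt_iff₀ (abs_pos.2 hne)] at hn
  linarith [hbound n, abs_nonneg (ψ t)]

lemma eq_mul_of_add_of_bounded
    (hadd : ∀ d e, 0 < d → 0 < e → φ (d + e) = φ d + φ e) (hK : ∀ t ∈ Ioc (0 : ℝ) 1, |φ t| ≤ K)
    {t : ℝ} (ht : 0 < t) : φ t = φ 1 * t := by
  have := eq_zero_of_add_of_bounded (ψ := fun t ↦ φ t - φ 1 * t) (K := K + |φ 1|)
    (fun d e hd he ↦ by simp only [hadd d e hd he]; ring)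
    (fun t ht ↦ by
      calc |φ t - φ 1 * t| ≤ |φ t| + |φ 1| * t := by
            rw [← abs_of_pos ht.1, ← abs_mul, abs_of_pos ht.1]; exact abs_sub _ _
        _ ≤ K + |φ 1| := add_le_add (hK t ht) (mul_le_of_le_one_right (abs_nonneg _) ht.2))
    (by simp) ht
  linarith

lemma eq_mul_of_ae_add_eq (hg : Measurable g)
    (h : ∀ d, 0 < d → ∀ᵐ u, 0 < u → g (u + d) = g u + φ d) {d : ℝ} (hd : 0 < d) :
    φ d = φ 1 * d :=
  let ⟨_, hK⟩ := exists_bound_of_ae_add_eq hg h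
  eq_mul_of_add_of_bounded (fun _ _ hd he ↦ map_add_of_ae_add_eq h hd he) hK hd

end Increments

section Pexider

variable {a b c : ℝ → ℝ}

lemma exists_ae_add_eq_add_of_pexider
    (hgood : ∀ᵐ s, ∀ᵐ x, 0 < x → x < s → a x + b (s - x) = c s) {d : ℝ} (hd : 0 < d) :
    ∃ k, ∀ᵐ u, 0 < u → b (u + d) = b u + k := by
  obtain ⟨k, hk, -⟩ := exists_ae_eq_of_ae_ae_Ioo (f := fun u ↦ b (u + d) - b u)
    (κ := fun s ↦ c (s + d) - c s) (by
      filter_upwards [hgood, ae_comp_add_right hgood d] with s hs hsd _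
      filter_upwards [ae_comp_sub_left hs s, ae_comp_sub_left hsd s] with u h1 h2 hu hus
      have e1 := h1 (sub_pos.2 hus) (by linarith)
      have e2 := h2 (by linarith) (by linarith)
      rw [sub_sub_cancel] at e1
      rw [show s + d - (s - u) = u + d by ring] at e2
      linarith)
  exact ⟨k, hk.mono fun u hu hu0 ↦ sub_eq_iff_eq_add'.1 (hu hu0)⟩

lemma exists_ae_eq_affine_of_pexider {lam β : ℝ}
    (hgood : ∀ᵐ s, ∀ᵐ x, 0 < x → x < s → a x + b (s - x) = c s)
    (hb : ∀ᵐ y, 0 < y → b y = lam * y + β) :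
    ∃ α, (∀ᵐ x, 0 < x → a x = lam * x + α) ∧ ∀ᵐ s, 0 < s → c s = lam * s + α + β := by
  obtain ⟨α, ha, hc⟩ := exists_ae_eq_of_ae_ae_Ioo (f := fun x ↦ a x - lam * x)
    (κ := fun s ↦ c s - lam * s - β) (by
      filter_upwards [hgood] with s hs _
      filter_upwards [hs, ae_comp_sub_left hb s] with x h1 h2 hx hxs
      linarith [h1 hx hxs, h2 (sub_pos.2 hxs)])
  exact ⟨α, ha.mono fun x hx hx0 ↦ by linarith [hx hx0],
    hc.mono fun s hs hs0 ↦ by linarith [hs hs0]⟩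

end Pexider

theorem stmt_3_general (a b c : ℝ → ℝ)
    (hb : Measurable b)
    (N : Set (ℝ × ℝ)) (hN0 : volume N = 0)
    (heq : ∀ x y : ℝ, 0 < x → 0 < y → (x, y) ∉ N → a x + b y = c (x + y)) :
    ∃ lam α β : ℝ, ∀ᵐ x : ℝ ∂volume, x ∈ Ioi (0 : ℝ) →
      a x = lam * x + α ∧ b x = lam * x + β ∧ c x = lam * x + α + β := by
  have hgood : ∀ᵐ s, ∀ᵐ x, 0 < x → x < s → a x + b (s - x) = c s := by
    filter_upwards [ae_ae_sub_of_ae_prod (P := fun x y ↦ 0 < x → 0 < y → a x + b y = c (x + y))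
      (measure_eq_zero_iff_ae_notMem.1 hN0 |>.mono fun z hz hz1 hz2 ↦ heq _ _ hz1 hz2 hz)]
      with s hs
    filter_upwards [hs] with x hx hx0 hxs
    simpa using hx hx0 (sub_pos.2 hxs)
  choose! φ hφ using fun d (hd : 0 < d) ↦ exists_ae_add_eq_add_of_pexider hgood hd
  obtain ⟨β, hβ⟩ := exists_ae_eq_affine_of_ae_add_eq hb fun d hd ↦ by
    simpa only [eq_mul_of_ae_add_eq hb hφ hd] using hφ d hd
  obtain ⟨α, hα, hc⟩ := exists_ae_eq_affine_of_pexider hgood hβ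
  refine ⟨φ 1, α, β, ?_⟩
  filter_upwards [hα, hβ, hc] with x h1 h2 h3 hx
  exact ⟨h1 hx, h2 hx, h3 hx⟩

theorem stmt_3 (a b c : ℝ → ℝ)
    (ha : Measurable a) (hb : Measurable b) (hc : Measurable c)
    (N : Set (ℝ × ℝ)) (hN0 : volume N = 0)
    (heq : ∀ x y : ℝ, 0 < x → 0 < y → (x, y) ∉ N → a x + b y = c (x + y)) :
    ∃ lam α β : ℝ, ∀ᵐ x : ℝ ∂volume, x ∈ Ioi (0 : ℝ) →
      a x = lam * x + α ∧ b x = lam * x + β ∧ c x = lam * x + α + β :=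
  stmt_3_general a b c hb N hN0 heq
end

section
/- Let a, b, c, d : (0,∞) → ℝ (no regularity assumed) and suppose there is a measurable set M ⊆ (0,∞)² with l₂(M) = 0 such that a(x) + b(y) = c(x+y) + d(x/y) for all (x,y) ∈ (0,∞)² \ M. Then there exist an additive function A : (0,∞) → ℝ, logarithmic type functions L_a, L_b : (0,∞) → ℝ, and constants α, β, γ ∈ ℝ such that for Lebesgue-almost all x ∈ (0,∞): a(x) = A(x) + L_a(x) + α, b(x) = A(x) + L_b(x) + β, c(x) = A(x) + L_a(x) + L_b(x) + γ, and d(x) = L_a(x/(x+1)) − L_b(x+1) + α + β − γ. -/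
/-!
Scaling both variables by `l` leaves `x / y` unchanged, so `d` drops out:
`Δₗc (x + y) = Δₗa x + Δₗb y` for a.e. `(l, x, y)`, where `Δₗf x = f (l * x) - f x`
(`scaleSub f l x`). For `l = 2` this is a Pexider equation; by de Bruijn's theorem (a function
that is additive almost everywhere agrees a.e. with an additive function) `Δ₂a` and `Δ₂b` are
a.e. affine with a common additive part `A`. Comparing the scaled equation at `(2x, y)` and at
`(x, x + y)` shows that `Δₗ(b - A) x` does not depend on `x`, so `b - A` is a.e. a logarithmic
function plus a constant (de Bruijn's theorem again, transported by `exp`); likewise for `a`,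
and then `c` and `d` are read off the equation.
-/

open MeasureTheory Measure Set Filter

namespace MeasureTheory

variable {α β : Type*} [MeasurableSpace α] [MeasurableSpace β]
  {μ : Measure α} {ν : Measure β}

theorem exists_mem_of_ae {s : Set α} {p : α → Prop} (hs : μ s ≠ 0)
    (h : ∀ᵐ x ∂μ, p x) : ∃ x ∈ s, p x :=
  exists_mem_of_measure_ne_zero_of_ae hs (ae_restrict_of_ae h)

theorem exists_mem_ae_of_ae_prod_left [SFinite ν] {s : Set α} {P : α × β → Prop}
    (hs : μ s ≠ 0) (h : ∀ᵐ p ∂μ.prod ν, P p) : ∃ x ∈ s, ∀ᵐ y ∂ν, P (x, y) :=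
  exists_mem_of_ae hs (ae_ae_of_ae_prod h)

theorem exists_mem_ae_of_ae_prod_right [SFinite μ] [SFinite ν] {t : Set β}
    {P : α × β → Prop} (ht : ν t ≠ 0) (h : ∀ᵐ p ∂μ.prod ν, P p) :
    ∃ y ∈ t, ∀ᵐ x ∂μ, P (x, y) :=
  exists_mem_ae_of_ae_prod_left ht (measurePreserving_swap.quasiMeasurePreserving.ae h)

end MeasureTheory

namespace Real

theorem ae_ne_zero : ∀ᵐ x : ℝ, x ≠ 0 := by
  simp [ae_iff]

theorem quasiMeasurePreserving_const_mul {c : ℝ} (hc : c ≠ 0) :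
    QuasiMeasurePreserving (c * ·) volume volume :=
  quasiMeasurePreserving_smul volume hc

theorem quasiMeasurePreserving_mul :
    QuasiMeasurePreserving (fun p : ℝ × ℝ => p.1 * p.2) volume volume :=
  QuasiMeasurePreserving.prod_of_right measurable_mul <| by
    filter_upwards [ae_ne_zero] with x hx using quasiMeasurePreserving_const_mul hx

theorem quasiMeasurePreserving_exp : QuasiMeasurePreserving exp volume volume := by
  refine ⟨measurable_exp, AbsolutelyContinuous.mk fun s _ hs => ?_⟩
  rw [map_apply measurable_exp ‹_›]
  have hsub : exp ⁻¹' s ⊆ log '' (s ∩ Ioi 0) := fun u hu =>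
    ⟨exp u, ⟨hu, exp_pos u⟩, log_exp u⟩
  refine measure_mono_null hsub (addHaar_image_eq_zero_of_differentiableOn_of_addHaar_eq_zero _
    (fun x hx => (differentiableAt_log hx.2.ne').differentiableWithinAt)
    (measure_mono_null inter_subset_left hs))

theorem exists_ae_eq_add_sub_of_ae_add_pos {F : ℝ → ℝ}
    (hF : ∀ᵐ p : ℝ × ℝ, 0 < p.1 → 0 < p.2 → F (p.1 + p.2) = F p.1 + F p.2) (x : ℝ) :
    ∃ c, ∀ᵐ t, |x| < t → F (x + t) - F t = c := by
  have hsub :=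
    (measurePreserving_prod_sub_swap (volume : Measure ℝ) volume).quasiMeasurePreserving
  have hstep : ∀ᵐ p : ℝ × ℝ, |x| < p.2 → p.2 < p.1 →
      F (x + p.1) - F p.1 = F (x + p.2) - F p.2 := by
    filter_upwards [hsub.ae hF,
      ((QuasiMeasurePreserving.prodMap (quasiMeasurePreserving_add_left volume x)
        (.id volume)).comp hsub).ae hF]
      with ⟨t, w⟩ h₁ h₂ hw hwt
    have hw₀ : 0 < w := (abs_nonneg x).trans_lt hw
    have e₁ : F (w + (t - w)) = F w + F (t - w) := h₁ hw₀ (sub_pos.2 hwt)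
    have e₂ : F (x + w + (t - w)) = F (x + w) + F (t - w) :=
      h₂ (show 0 < x + w by linarith [neg_abs_le x]) (sub_pos.2 hwt)
    rw [add_sub_cancel] at e₁
    rw [add_assoc, add_sub_cancel] at e₂
    linarith
  have hsymm : ∀ᵐ p : ℝ × ℝ, |x| < p.1 → |x| < p.2 →
      F (x + p.1) - F p.1 = F (x + p.2) - F p.2 := by
    filter_upwards [hstep,
      (measurePreserving_swap (μ := volume) (ν := volume)).quasiMeasurePreserving.ae hstep]
      with ⟨t, w⟩ h h' ht hw
    rcases lt_trichotomy w t with hlt | rfl | hgt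
    · exact h hw hlt
    · rfl
    · exact (h' ht hgt).symm
  obtain ⟨w, hw, hae⟩ := exists_mem_ae_of_ae_prod_right (t := Ioi |x|) (by simp) hsymm
  exact ⟨F (x + w) - F w, hae.mono fun t ht htx => ht htx hw⟩

theorem exists_addMonoidHom_ae_eq_of_ae_add_pos {F : ℝ → ℝ}
    (hF : ∀ᵐ p : ℝ × ℝ, 0 < p.1 → 0 < p.2 → F (p.1 + p.2) = F p.1 + F p.2) :
    ∃ A : ℝ →+ ℝ, ∀ᵐ x, 0 < x → F x = A x := by
  choose A hA using exists_ae_eq_add_sub_of_ae_add_pos hF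
  have hadd : ∀ x y, A (x + y) = A x + A y := by
    intro x y
    obtain ⟨t, ht, hxy, hx, hy⟩ := exists_mem_of_ae (s := Ioi (|x| + |y|)) (by simp)
      ((hA (x + y)).and (((quasiMeasurePreserving_add_left volume y).ae (hA x)).and (hA y)))
    rw [mem_Ioi] at ht
    have e₁ := hxy ((abs_add_le x y).trans_lt ht)
    have e₂ := hx (by linarith [le_abs_self y, neg_abs_le y, abs_nonneg x])
    have e₃ := hy (by linarith [abs_nonneg x])
    rw [← add_assoc] at e₂
    linarith
  refine ⟨AddMonoidHom.mk' A hadd, ?_⟩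
  filter_upwards [ae_ae_of_ae_prod hF] with x hx hx₀
  obtain ⟨t, ht, h₁, h₂⟩ := exists_mem_of_ae (s := Ioi |x|) (by simp) (hx.and (hA x))
  have e₁ := h₁ hx₀ ((abs_nonneg x).trans_lt ht)
  have e₂ := h₂ ht
  simp only [AddMonoidHom.mk'_apply]
  linarith

theorem exists_addMonoidHom_ae_eq_of_ae_add {F : ℝ → ℝ}
    (hF : ∀ᵐ p : ℝ × ℝ, F (p.1 + p.2) = F p.1 + F p.2) :
    ∃ A : ℝ →+ ℝ, ∀ᵐ x, F x = A x := by
  obtain ⟨A, hA⟩ := exists_addMonoidHom_ae_eq_of_ae_add_pos (hF.mono fun p hp _ _ => hp)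
  refine ⟨A, ?_⟩
  filter_upwards [ae_ae_of_ae_prod hF] with x hx
  obtain ⟨y, hy, h₁, h₂, h₃⟩ := exists_mem_of_ae (s := Ioi |x|) (by simp)
    (hx.and (hA.and ((quasiMeasurePreserving_add_left volume x).ae hA)))
  rw [mem_Ioi] at hy
  have e₂ := h₂ ((abs_nonneg x).trans_lt hy)
  have e₃ := h₃ (by linarith [neg_abs_le x])
  rw [map_add] at e₃
  linarith

theorem exists_addMonoidHom_ae_eq_comp_log_of_ae_mul {m : ℝ → ℝ}
    (hm : ∀ᵐ p : ℝ × ℝ, 0 < p.1 → 0 < p.2 → m (p.1 * p.2) = m p.1 + m p.2) :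
    ∃ A : ℝ →+ ℝ, ∀ᵐ x, 0 < x → m x = A (log x) := by
  obtain ⟨A, hA⟩ := exists_addMonoidHom_ae_eq_of_ae_add (F := fun u => m (exp u)) <| by
    filter_upwards [(QuasiMeasurePreserving.prodMap quasiMeasurePreserving_exp
      quasiMeasurePreserving_exp).ae hm] with p hp
    simpa [exp_add] using hp (exp_pos _) (exp_pos _)
  refine ⟨A, ?_⟩
  rw [ae_iff] at hA ⊢
  refine measure_mono_null ?_ (addHaar_image_eq_zero_of_differentiableOn_of_addHaar_eq_zero
    volume differentiable_exp.differentiableOn hA)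
  intro x hx
  obtain ⟨hx₀, hne⟩ := Classical.not_imp.1 hx
  exact ⟨log x, by simpa [exp_log hx₀] using hne, exp_log hx₀⟩

theorem _root_.AddMonoidHom.map_log_mul (L : ℝ →+ ℝ) {x y : ℝ} (hx : x ≠ 0)
    (hy : y ≠ 0) : L (log (x * y)) = L (log x) + L (log y) := by
  rw [log_mul hx hy, map_add]

theorem exists_addMonoidHom_ae_eq_add_of_ae_add_add_eq_add_add {g : ℝ → ℝ}
    (hg : ∀ᵐ q : ℝ × ℝ × ℝ, 0 < q.1 → 0 < q.2.1 → 0 < q.2.2 →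
      g (q.1 + q.2.1) + g q.2.2 = g q.1 + g (q.2.1 + q.2.2)) :
    ∃ (A : ℝ →+ ℝ) (α : ℝ), ∀ᵐ x, 0 < x → g x = A x + α := by
  obtain ⟨x₀, hx₀, hw⟩ := exists_mem_ae_of_ae_prod_left (s := Ioi 0) (by simp) hg
  set w : ℝ → ℝ := fun y => g (x₀ + y) - g x₀ - g y
  -- `g (y + z) - g y - g z = w y` a.e.; the left side is symmetric, so `w` is a.e. constant.
  have hw_eq : ∀ᵐ p : ℝ × ℝ, 0 < p.1 → 0 < p.2 → w p.1 = w p.2 := by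
    filter_upwards [hw,
      (measurePreserving_swap (μ := volume) (ν := volume)).quasiMeasurePreserving.ae hw]
      with ⟨y, z⟩ h₁ h₂ hy hz
    have e₁ : g (x₀ + y) + g z = g x₀ + g (y + z) := h₁ hx₀ hy hz
    have e₂ : g (x₀ + z) + g y = g x₀ + g (z + y) := h₂ hx₀ hz hy
    rw [add_comm z y] at e₂
    simp only [w]
    linarith
  obtain ⟨z₀, hz₀, hc⟩ := exists_mem_ae_of_ae_prod_right (t := Ioi 0) (by simp) hw_eq
  obtain ⟨A, hA⟩ := exists_addMonoidHom_ae_eq_of_ae_add_pos (F := fun x => g x + w z₀) <| by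
    filter_upwards [hw, quasiMeasurePreserving_fst.ae hc] with ⟨y, z⟩ h₁ h₂ hy hz
    have e₁ : g (x₀ + y) + g z = g x₀ + g (y + z) := h₁ hx₀ hy hz
    have e₂ : w y = w z₀ := h₂ hy hz₀
    simp only [w] at e₂ ⊢
    linarith
  exact ⟨A, -w z₀, hA.mono fun x hx hx₀ => by linarith [hx hx₀]⟩

theorem exists_addMonoidHom_ae_eq_add_of_ae_pexider_pos {f g h : ℝ → ℝ}
    (hfgh : ∀ᵐ p : ℝ × ℝ, 0 < p.1 → 0 < p.2 → f (p.1 + p.2) = g p.1 + h p.2) :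
    ∃ (A : ℝ →+ ℝ) (α β : ℝ),
      (∀ᵐ x, 0 < x → g x = A x + α) ∧ ∀ᵐ x, 0 < x → h x = A x + β := by
  have hdiff : ∀ᵐ p : ℝ × ℝ, 0 < p.1 → 0 < p.2 → g p.1 - h p.1 = g p.2 - h p.2 := by
    filter_upwards [hfgh,
      (measurePreserving_swap (μ := volume) (ν := volume)).quasiMeasurePreserving.ae hfgh]
      with ⟨x, y⟩ h₁ h₂ hx hy
    have e₁ : f (x + y) = g x + h y := h₁ hx hy
    have e₂ : f (y + x) = g y + h x := h₂ hy hx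
    rw [add_comm y x] at e₂
    linarith
  obtain ⟨y₀, hy₀, hδ⟩ := exists_mem_ae_of_ae_prod_right (t := Ioi 0) (by simp) hdiff
  set δ := g y₀ - h y₀
  have hsymm : ∀ᵐ p : ℝ × ℝ, 0 < p.1 → 0 < p.2 →
      f (p.1 + p.2) = g p.1 + g p.2 - δ := by
    filter_upwards [hfgh, quasiMeasurePreserving_snd.ae hδ] with p h₁ h₂ hx hy
    linarith [h₁ hx hy, h₂ hy hy₀]
  have hassoc : ∀ᵐ q : ℝ × ℝ × ℝ, 0 < q.1 → 0 < q.2.1 → 0 < q.2.2 →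
      g (q.1 + q.2.1) + g q.2.2 = g q.1 + g (q.2.1 + q.2.2) := by
    filter_upwards [((QuasiMeasurePreserving.prodMap (quasiMeasurePreserving_add volume volume)
        (.id volume)).comp volume_preserving_prodAssoc.symm.quasiMeasurePreserving).ae hsymm,
      (QuasiMeasurePreserving.prodMap (.id volume)
        (quasiMeasurePreserving_add volume volume)).ae hsymm] with ⟨x, y, z⟩ h₁ h₂ hx hy hz
    have e₁ : f (x + y + z) = g (x + y) + g z - δ := h₁ (add_pos hx hy) hz
    have e₂ : f (x + (y + z)) = g x + g (y + z) - δ := h₂ hx (add_pos hy hz)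
    rw [← add_assoc] at e₂
    linarith
  obtain ⟨A, α, hA⟩ := exists_addMonoidHom_ae_eq_add_of_ae_add_add_eq_add_add hassoc
  exact ⟨A, α, α - δ, hA,
    (hA.and hδ).mono fun x hx hx₀ => by linarith [hx.1 hx₀, hx.2 hx₀ hy₀]⟩

theorem ae_eq_of_ae_mul_eq {k : ℝ → ℝ} {s : ℝ} (hs : 0 < s)
    (h : ∀ᵐ l, 0 < l → k (l * s) = k s) : ∀ᵐ x, 0 < x → k x = k s := by
  filter_upwards [(quasiMeasurePreserving_const_mul (inv_ne_zero hs.ne')).ae h]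
    with x hx hx₀
  rw [← hx (by positivity), inv_mul_eq_div, div_mul_cancel₀ x hs.ne']

theorem exists_addMonoidHom_ae_eq_comp_log_add_of_ae_mul_eq_add {F m : ℝ → ℝ}
    (h : ∀ᵐ p : ℝ × ℝ, 0 < p.1 → 0 < p.2 → F (p.1 * p.2) = m p.1 + F p.2) :
    ∃ (B : ℝ →+ ℝ) (β : ℝ), ∀ᵐ x, 0 < x → F x = B (log x) + β := by
  obtain ⟨x₀, hx₀, hm⟩ := exists_mem_ae_of_ae_prod_right (t := Ioi 0) (by simp) h
  -- `m` is a.e. `F (· * x₀) - F x₀`, which turns products into sums.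
  obtain ⟨B, hB⟩ := exists_addMonoidHom_ae_eq_comp_log_of_ae_mul (m := m) <| by
    filter_upwards [quasiMeasurePreserving_mul.ae hm,
      (QuasiMeasurePreserving.prodMap (.id volume) (quasiMeasurePreserving_const_mul
        hx₀.ne')).ae h, quasiMeasurePreserving_snd.ae hm] with ⟨l, l'⟩ h₁ h₂ h₃ hl hl'
    have e₁ : F (l * l' * x₀) = m (l * l') + F x₀ := h₁ (mul_pos hl hl') hx₀
    have e₂ : F (l * (x₀ * l')) = m l + F (x₀ * l') := h₂ hl (mul_pos hx₀ hl')
    have e₃ : F (l' * x₀) = m l' + F x₀ := h₃ hl' hx₀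
    rw [mul_comm x₀ l', ← mul_assoc] at e₂
    linarith
  have hk : ∀ᵐ p : ℝ × ℝ, 0 < p.1 → 0 < p.2 →
      F (p.1 * p.2) - B (log (p.1 * p.2)) = F p.2 - B (log p.2) := by
    filter_upwards [h, quasiMeasurePreserving_fst.ae hB] with ⟨l, x⟩ h₁ h₂ hl hx
    rw [log_mul hl.ne' hx.ne', map_add]
    linarith [h₁ hl hx, h₂ hl]
  obtain ⟨x₁, hx₁, hk₁⟩ := exists_mem_ae_of_ae_prod_right (t := Ioi 0) (by simp) hk
  refine ⟨B, F x₁ - B (log x₁), ?_⟩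
  filter_upwards [ae_eq_of_ae_mul_eq (k := fun x => F x - B (log x)) hx₁
    (hk₁.mono fun l hl hl₀ => hl hl₀ hx₁)] with x hx hx₀
  linarith [hx hx₀]

def scaleSub (f : ℝ → ℝ) (l x : ℝ) : ℝ := f (l * x) - f x

theorem scaleSub_add_eq_of_add_eq {a b c d : ℝ → ℝ} {l x y : ℝ} (hl : l ≠ 0)
    (h : a x + b y = c (x + y) + d (x / y))
    (hscaled : a (l * x) + b (l * y) = c (l * x + l * y) + d (l * x / (l * y))) :
    scaleSub c l (x + y) = scaleSub a l x + scaleSub b l y := by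
  rw [← mul_add, mul_div_mul_left x y hl] at hscaled
  simp only [scaleSub]
  linarith

theorem ae_scale_sub_of_ae_eq_of_pos {a b c d : ℝ → ℝ}
    (hH : ∀ᵐ p : ℝ × ℝ, 0 < p.1 → 0 < p.2 →
      a p.1 + b p.2 = c (p.1 + p.2) + d (p.1 / p.2))
    {l : ℝ} (hl : 0 < l) :
    ∀ᵐ p : ℝ × ℝ, 0 < p.1 → 0 < p.2 →
      scaleSub c l (p.1 + p.2) = scaleSub a l p.1 + scaleSub b l p.2 := by
  filter_upwards [hH, (quasiMeasurePreserving_smul volume hl.ne').ae hH]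
    with ⟨x, y⟩ h₁ h₂ hx hy
  exact scaleSub_add_eq_of_add_eq hl.ne' (h₁ hx hy) (h₂ (mul_pos hl hx) (mul_pos hl hy))

theorem ae_scale_sub_of_ae_eq {a b c d : ℝ → ℝ}
    (hH : ∀ᵐ p : ℝ × ℝ, 0 < p.1 → 0 < p.2 →
      a p.1 + b p.2 = c (p.1 + p.2) + d (p.1 / p.2)) :
    ∀ᵐ q : ℝ × ℝ × ℝ, 0 < q.1 → 0 < q.2.1 → 0 < q.2.2 →
      scaleSub c q.1 (q.2.1 + q.2.2) = scaleSub a q.1 q.2.1 + scaleSub b q.1 q.2.2 := by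
  have hsmul : QuasiMeasurePreserving (fun q : ℝ × ℝ × ℝ => q.1 • q.2) volume volume :=
    QuasiMeasurePreserving.prod_of_right (by fun_prop) <| by
      filter_upwards [ae_ne_zero] with l hl using quasiMeasurePreserving_smul volume hl
  filter_upwards [quasiMeasurePreserving_snd.ae hH, hsmul.ae hH]
    with ⟨l, x, y⟩ h₁ h₂ hl hx hy
  exact scaleSub_add_eq_of_add_eq hl.ne' (h₁ hx hy) (h₂ (mul_pos hl hx) (mul_pos hl hy))

theorem ae_scale_sub_add_eq_of_ae_scale_sub {a b c : ℝ → ℝ} {A : ℝ →+ ℝ} {α : ℝ}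
    (hscale : ∀ᵐ q : ℝ × ℝ × ℝ, 0 < q.1 → 0 < q.2.1 → 0 < q.2.2 →
      scaleSub c q.1 (q.2.1 + q.2.2) = scaleSub a q.1 q.2.1 + scaleSub b q.1 q.2.2)
    (ha : ∀ᵐ x, 0 < x → scaleSub a 2 x = A x + α) :
    ∀ᵐ q : ℝ × ℝ × ℝ, 0 < q.1 → 0 < q.2.1 → 0 < q.2.2 →
      scaleSub (fun x => b x - A x) q.1 (q.2.1 + q.2.2) =
        scaleSub (fun x => b x - A x) q.1 q.2.2 := by
  filter_upwards [(QuasiMeasurePreserving.prodMap (.id volume)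
      (QuasiMeasurePreserving.prodMap (quasiMeasurePreserving_const_mul two_ne_zero)
        (.id volume))).ae hscale,
    (QuasiMeasurePreserving.prodMap (.id volume)
      (measurePreserving_prod_add volume volume).quasiMeasurePreserving).ae hscale,
    (quasiMeasurePreserving_mul.comp
      (QuasiMeasurePreserving.prodMap (.id volume) quasiMeasurePreserving_fst)).ae ha,
    (quasiMeasurePreserving_fst.comp quasiMeasurePreserving_snd).ae ha]
    with ⟨l, x, y⟩ h₁ h₂ h₃ h₄ hl hx hy
  have e₁ : scaleSub c l (2 * x + y) = scaleSub a l (2 * x) + scaleSub b l y :=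
    h₁ hl (mul_pos two_pos hx) hy
  have e₂ : scaleSub c l (x + (x + y)) = scaleSub a l x + scaleSub b l (x + y) :=
    h₂ hl hx (add_pos hx hy)
  have e₃ : scaleSub a 2 (l * x) = A (l * x) + α := h₃ (mul_pos hl hx)
  have e₄ : scaleSub a 2 x = A x + α := h₄ hx
  have hA : A (l * (x + y)) = A (l * x) + A (l * y) := by rw [mul_add, map_add]
  rw [show x + (x + y) = 2 * x + y by ring] at e₂
  simp only [scaleSub, mul_left_comm l 2 x] at e₁ e₂ e₃ e₄ ⊢
  linarith [map_add A x y]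

theorem exists_ae_eq_add_comp_log_of_ae_scale_sub {a b c : ℝ → ℝ} {A : ℝ →+ ℝ}
    {α : ℝ}
    (hscale : ∀ᵐ q : ℝ × ℝ × ℝ, 0 < q.1 → 0 < q.2.1 → 0 < q.2.2 →
      scaleSub c q.1 (q.2.1 + q.2.2) = scaleSub a q.1 q.2.1 + scaleSub b q.1 q.2.2)
    (ha : ∀ᵐ x, 0 < x → scaleSub a 2 x = A x + α) :
    ∃ (B : ℝ →+ ℝ) (β : ℝ), ∀ᵐ x, 0 < x → b x = A x + B (log x) + β := by
  set F : ℝ → ℝ := fun x => b x - A x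
  have hshift := ae_scale_sub_add_eq_of_ae_scale_sub hscale ha
  have hconst : ∀ᵐ q : ℝ × ℝ × ℝ, 0 < q.1 → 0 < q.2.1 → 0 < q.2.2 →
      scaleSub F q.1 q.2.1 = scaleSub F q.1 q.2.2 := by
    filter_upwards [hshift, (QuasiMeasurePreserving.prodMap (.id volume)
        (measurePreserving_swap (μ := volume) (ν := volume)).quasiMeasurePreserving).ae hshift]
      with ⟨l, x, y⟩ h₁ h₂ hl hx hy
    have e₁ : scaleSub F l (x + y) = scaleSub F l y := h₁ hl hx hy
    have e₂ : scaleSub F l (y + x) = scaleSub F l x := h₂ hl hy hx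
    rw [add_comm y x] at e₂
    rw [← e₂, e₁]
  obtain ⟨y₀, hy₀, hK⟩ := exists_mem_ae_of_ae_prod_right (t := Ioi 0) (by simp)
    (volume_preserving_prodAssoc.quasiMeasurePreserving.ae hconst)
  obtain ⟨B, β, hB⟩ := exists_addMonoidHom_ae_eq_comp_log_add_of_ae_mul_eq_add
      (F := F) (m := fun l => scaleSub F l y₀) <| by
    filter_upwards [hK] with ⟨l, x⟩ h hl hx
    have e : scaleSub F l x = scaleSub F l y₀ := h hl hx hy₀
    simp only [scaleSub] at e ⊢
    linarith
  exact ⟨B, β, hB.mono fun x hx hx₀ => by linarith [hx hx₀]⟩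

theorem exists_const_ae_eq_of_ae_scale_sub {a b c : ℝ → ℝ} {A La Lb : ℝ →+ ℝ}
    {α β : ℝ}
    (hscale : ∀ᵐ q : ℝ × ℝ × ℝ, 0 < q.1 → 0 < q.2.1 → 0 < q.2.2 →
      scaleSub c q.1 (q.2.1 + q.2.2) = scaleSub a q.1 q.2.1 + scaleSub b q.1 q.2.2)
    (ha : ∀ᵐ x, 0 < x → a x = A x + La (log x) + α)
    (hb : ∀ᵐ x, 0 < x → b x = A x + Lb (log x) + β) :
    ∃ γ, ∀ᵐ x, 0 < x → c x = A x + La (log x) + Lb (log x) + γ := by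
  set k : ℝ → ℝ := fun s => c s - (A s + La (log s) + Lb (log s))
  have hk : ∀ᵐ q : ℝ × ℝ × ℝ, 0 < q.1 → 0 < q.2.1 → 0 < q.2.2 →
      k (q.1 * (q.2.1 + q.2.2)) = k (q.2.1 + q.2.2) := by
    filter_upwards [hscale, (quasiMeasurePreserving_mul.comp
        (QuasiMeasurePreserving.prodMap (.id volume) quasiMeasurePreserving_fst)).ae ha,
      (quasiMeasurePreserving_fst.comp quasiMeasurePreserving_snd).ae ha,
      (quasiMeasurePreserving_mul.comp
        (QuasiMeasurePreserving.prodMap (.id volume) quasiMeasurePreserving_snd)).ae hb,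
      (quasiMeasurePreserving_snd.comp quasiMeasurePreserving_snd).ae hb]
      with ⟨l, x, y⟩ h h₁ h₂ h₃ h₄ hl hx hy
    have e₁ : a (l * x) = A (l * x) + La (log (l * x)) + α := h₁ (mul_pos hl hx)
    have e₂ : a x = A x + La (log x) + α := h₂ hx
    have e₃ : b (l * y) = A (l * y) + Lb (log (l * y)) + β := h₃ (mul_pos hl hy)
    have e₄ : b y = A y + Lb (log y) + β := h₄ hy
    have e : scaleSub c l (x + y) = scaleSub a l x + scaleSub b l y := h hl hx hy
    have hxy := (add_pos hx hy).ne'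
    have hA : A (l * (x + y)) = A (l * x) + A (l * y) := by rw [mul_add, map_add]
    simp only [scaleSub] at e
    simp only [k, hA, map_add A x y, La.map_log_mul hl.ne' hx.ne', La.map_log_mul hl.ne' hxy,
      Lb.map_log_mul hl.ne' hy.ne', Lb.map_log_mul hl.ne' hxy] at e₁ e₃ ⊢
    linarith
  obtain ⟨⟨x₀, y₀⟩, ⟨hx₀, hy₀⟩, hk₀⟩ := exists_mem_ae_of_ae_prod_right
    (t := Ioi 0 ×ˢ Ioi 0) (by simp [volume_eq_prod, prod_prod]) hk
  refine ⟨k (x₀ + y₀), ?_⟩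
  filter_upwards [ae_eq_of_ae_mul_eq (add_pos hx₀ hy₀)
    (hk₀.mono fun l h hl => h hl hx₀ hy₀)] with x hx hx₀
  linarith [hx hx₀]

theorem ae_eq_of_ae_add_eq_add_div {a b c d : ℝ → ℝ} {A La Lb : ℝ →+ ℝ} {α β γ : ℝ}
    (hH : ∀ᵐ p : ℝ × ℝ, 0 < p.1 → 0 < p.2 →
      a p.1 + b p.2 = c (p.1 + p.2) + d (p.1 / p.2))
    (ha : ∀ᵐ x, 0 < x → a x = A x + La (log x) + α)
    (hb : ∀ᵐ x, 0 < x → b x = A x + Lb (log x) + β)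
    (hc : ∀ᵐ x, 0 < x → c x = A x + La (log x) + Lb (log x) + γ) :
    ∀ᵐ x, 0 < x → d x = La (log (x / (x + 1))) - Lb (log (x + 1)) + α + β - γ := by
  obtain ⟨y, hy, hd⟩ := exists_mem_ae_of_ae_prod_right (t := Ioi 0) (by simp)
    (hH.and ((quasiMeasurePreserving_fst.ae ha).and ((quasiMeasurePreserving_snd.ae hb).and
      ((quasiMeasurePreserving_add volume volume).ae hc))))
  filter_upwards [(quasiMeasurePreserving_const_mul (ne_of_gt hy)).ae hd]
    with r ⟨h, h₁, h₂, h₃⟩ hr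
  have hyr : 0 < y * r := mul_pos hy hr
  have e : a (y * r) + b y = c (y * r + y) + d (y * r / y) := h hyr hy
  have e₁ : a (y * r) = A (y * r) + La (log (y * r)) + α := h₁ hyr
  have e₂ : b y = A y + Lb (log y) + β := h₂ hy
  have e₃ : c (y * r + y) = A (y * r + y) + La (log (y * r + y)) + Lb (log (y * r + y)) + γ :=
    h₃ (add_pos hyr hy)
  have hlog : log (y * r + y) = log y + log (r + 1) := by
    rw [show y * r + y = y * (r + 1) by ring, log_mul hy.ne' (by positivity)]
  rw [mul_div_cancel_left₀ r hy.ne'] at e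
  rw [hlog, map_add, map_add, map_add] at e₃
  rw [La.map_log_mul hy.ne' hr.ne'] at e₁
  rw [log_div hr.ne' (by positivity), map_sub]
  linarith

end Real

open Real in
theorem stmt_5_general (a b c d : ℝ → ℝ)
    (M : Set (ℝ × ℝ)) (hM0 : volume M = 0)
    (heq : ∀ x y : ℝ, 0 < x → 0 < y → (x, y) ∉ M →
      a x + b y = c (x + y) + d (x / y)) :
    ∃ A La Lb : ℝ → ℝ, ∃ α β γ : ℝ,
      (∀ x y : ℝ, 0 < x → 0 < y → A (x + y) = A x + A y) ∧
      (∀ x y : ℝ, 0 < x → 0 < y → La (x * y) = La x + La y) ∧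
      (∀ x y : ℝ, 0 < x → 0 < y → Lb (x * y) = Lb x + Lb y) ∧
      (∀ᵐ x : ℝ ∂volume, x ∈ Ioi (0 : ℝ) →
        a x = A x + La x + α ∧
        b x = A x + Lb x + β ∧
        c x = A x + La x + Lb x + γ ∧
        d x = La (x / (x + 1)) - Lb (x + 1) + α + β - γ) := by
  have hH : ∀ᵐ p : ℝ × ℝ, 0 < p.1 → 0 < p.2 →
      a p.1 + b p.2 = c (p.1 + p.2) + d (p.1 / p.2) := by
    filter_upwards [measure_eq_zero_iff_ae_notMem.1 hM0] with p hp hx hy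
      using heq p.1 p.2 hx hy hp
  have hH' : ∀ᵐ p : ℝ × ℝ, 0 < p.1 → 0 < p.2 →
      b p.1 + a p.2 = c (p.1 + p.2) + d (p.1 / p.2)⁻¹ := by
    filter_upwards
      [(measurePreserving_swap (μ := volume) (ν := volume)).quasiMeasurePreserving.ae hH]
      with p hp hx hy
    simpa [add_comm, inv_div] using hp hy hx
  obtain ⟨A, α₂, β₂, ha₂, hb₂⟩ :=
    exists_addMonoidHom_ae_eq_add_of_ae_pexider_pos (ae_scale_sub_of_ae_eq_of_pos hH two_pos)
  obtain ⟨Lb, β, hb⟩ :=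
    exists_ae_eq_add_comp_log_of_ae_scale_sub (ae_scale_sub_of_ae_eq hH) ha₂
  obtain ⟨La, α, ha⟩ := exists_ae_eq_add_comp_log_of_ae_scale_sub
    (ae_scale_sub_of_ae_eq (d := fun r => d r⁻¹) hH') hb₂
  obtain ⟨γ, hc⟩ := exists_const_ae_eq_of_ae_scale_sub (ae_scale_sub_of_ae_eq hH) ha hb
  refine ⟨A, fun x => La (log x), fun x => Lb (log x), α, β, γ, fun x y _ _ => map_add A x y,
    fun x y hx hy => La.map_log_mul hx.ne' hy.ne', fun x y hx hy => Lb.map_log_mul hx.ne' hy.ne',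
    ?_⟩
  filter_upwards [ha, hb, hc, ae_eq_of_ae_add_eq_add_div hH ha hb hc]
    with x ha hb hc hd hx
  exact ⟨ha hx, hb hx, hc hx, hd hx⟩

theorem stmt_5 (a b c d : ℝ → ℝ)
    (M : Set (ℝ × ℝ)) (hM : MeasurableSet M) (hM0 : volume M = 0)
    (heq : ∀ x y : ℝ, 0 < x → 0 < y → (x, y) ∉ M →
      a x + b y = c (x + y) + d (x / y)) :
    ∃ A La Lb : ℝ → ℝ, ∃ α β γ : ℝ,
      (∀ x y : ℝ, 0 < x → 0 < y → A (x + y) = A x + A y) ∧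
      (∀ x y : ℝ, 0 < x → 0 < y → La (x * y) = La x + La y) ∧
      (∀ x y : ℝ, 0 < x → 0 < y → Lb (x * y) = Lb x + Lb y) ∧
      (∀ᵐ x : ℝ ∂volume, x ∈ Ioi (0 : ℝ) →
        a x = A x + La x + α ∧
        b x = A x + Lb x + β ∧
        c x = A x + La x + Lb x + γ ∧
        d x = La (x / (x + 1)) - Lb (x + 1) + α + β - γ) :=
  stmt_5_general a b c d M hM0 heq
end

section
/- Let J be a proper linearly invariant σ-ideal in ℝ, let c > 0, and let A : ℝ → ℝ be additive (A(x+y) = A(x) + A(y) for all x, y ∈ ℝ). If there exists E ∈ J such that A vanishes on (c,∞) \ E, then A vanishes identically on ℝ. -/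
open Set

theorem stmt_7 (J : Set (Set ℝ))
    (hne : J.Nonempty) (hproper : (univ : Set ℝ) ∉ J)
    (hunion : ∀ s : ℕ → Set ℝ, (∀ n, s n ∈ J) → (⋃ n, s n) ∈ J)
    (hsub : ∀ A B : Set ℝ, A ∈ J → B ⊆ A → B ∈ J)
    (haff : ∀ A : Set ℝ, A ∈ J → ∀ α β : ℝ, α ≠ 0 →
      (fun x => α * x + β) '' A ∈ J)
    (c : ℝ) (hc : 0 < c)
    (A : ℝ → ℝ) (hA : ∀ x y : ℝ, A (x + y) = A x + A y)
    (E : Set ℝ) (hE : E ∈ J)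
    (hvan : ∀ x ∈ Ioi c \ E, A x = 0) :
    ∀ x : ℝ, A x = 0 := by
  -- union of two sets in J is in J
  have hunion2 : ∀ S T : Set ℝ, S ∈ J → T ∈ J → S ∪ T ∈ J := by
    intro S T hS hT
    have := hunion (fun n => if n = 0 then S else T) (by
      intro n; by_cases h : n = 0 <;> simp [h, hS, hT])
    convert this using 1
    ext y
    constructor
    · rintro (hy | hy)
      · exact mem_iUnion.2 ⟨0, by simp [hy]⟩
      · exact mem_iUnion.2 ⟨1, by simp [hy]⟩
    · intro hy
      obtain ⟨n, hn⟩ := mem_iUnion.1 hy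
      by_cases h : n = 0
      · left; simpa [h] using hn
      · right; simpa [h] using hn
  -- no half-line is in J
  have hhalf : ∀ M : ℝ, Ioi M ∉ J := by
    intro M hM
    apply hproper
    have : (univ : Set ℝ) = ⋃ n : ℕ, (fun x => (1:ℝ) * x + (-(n:ℝ))) '' Ioi M := by
      ext y
      simp only [mem_univ, mem_iUnion, mem_image, true_iff]
      obtain ⟨n, hn⟩ := exists_nat_gt (M - y)
      exact ⟨n, y + n, by simp [mem_Ioi]; linarith, by ring⟩
    rw [this]
    exact hunion _ (fun n => haff _ hM 1 (-(n:ℝ)) one_ne_zero)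
  intro x
  -- find t with t ∈ Ioi c \ E and t + x ∈ Ioi c \ E
  have E' : (fun s => (1:ℝ) * s + (-x)) '' E ∈ J := haff _ hE 1 (-x) one_ne_zero
  set M := max c (c - x) with hM
  have key : ∃ t, t ∈ Ioi c \ E ∧ t + x ∈ Ioi c \ E := by
    by_contra hcon
    push_neg at hcon
    apply hhalf M
    apply hsub _ _ (hunion2 _ _ hE E')
    intro t ht
    simp only [mem_Ioi] at ht
    have ht1 : t > c := lt_of_le_of_lt (le_max_left _ _) ht
    have ht2 : t + x > c := by
      have := lt_of_le_of_lt (le_max_right _ _) ht; linarith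
    by_cases hte : t ∈ E
    · exact Or.inl hte
    · right
      have := hcon t ⟨ht1, hte⟩
      have htxE : t + x ∈ E := by
        by_contra h
        exact this ⟨ht2, h⟩
      exact ⟨t + x, htxE, by ring⟩
  obtain ⟨t, h1, h2⟩ := key
  have e1 : A t = 0 := hvan t h1
  have e2 : A (t + x) = 0 := hvan _ h2
  have := hA t x
  rw [e1, e2] at this
  linarith
end

section
/- Let A : ℝ → ℝ be additive. If 2A(y) = A(y) holds for all y in (0,∞) outside a Lebesgue nullset, then A ≡ 0 on ℝ. -/
open MeasureTheory Set

theorem stmt_9 (A : ℝ → ℝ) (hA : ∀ x y : ℝ, A (x + y) = A x + A y)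
    (h : ∀ᵐ y : ℝ ∂volume, y ∈ Ioi (0 : ℝ) → 2 * A y = A y) :
    ∀ x : ℝ, A x = 0 := by
  intro x
  have h2 : ∀ᵐ y : ℝ ∂volume, y ∈ Ioi (0 : ℝ) → A y = 0 := by
    filter_upwards [h] with y hy hy'
    have := hy hy'
    linarith
  have h3 : ∀ᵐ y : ℝ ∂volume, (y ∈ Ioi (0 : ℝ) → A y = 0) ∧
      ((y + x) ∈ Ioi (0 : ℝ) → A (y + x) = 0) := by
    refine h2.and ?_
    exact (measurePreserving_add_right (volume : Measure ℝ) x).quasiMeasurePreserving.ae h2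
  set P : ℝ → Prop := fun y => (y ∈ Ioi (0 : ℝ) → A y = 0) ∧
      ((y + x) ∈ Ioi (0 : ℝ) → A (y + x) = 0) with hP
  have hnull : volume {y : ℝ | ¬ P y} = 0 := by
    rw [← MeasureTheory.ae_iff]
    exact h3
  obtain ⟨y, hyc, hyP⟩ : ∃ y, y ∈ Ioi (max 0 (-x)) ∧ P y := by
    by_contra hcon
    push_neg at hcon
    have hsub : Ioi (max 0 (-x)) ⊆ {y : ℝ | ¬ P y} := fun y hy => hcon y hy
    have := measure_mono (μ := volume) hsub
    rw [hnull, Real.volume_Ioi] at this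
    simp at this
  have hy0 : y ∈ Ioi (0 : ℝ) := mem_Ioi.mpr (lt_of_le_of_lt (le_max_left _ _) hyc)
  have hyx : y + x ∈ Ioi (0 : ℝ) := by
    have : -x < y := lt_of_le_of_lt (le_max_right _ _) hyc
    simp only [mem_Ioi]; linarith
  have h1 := hyP.1 hy0
  have h4 := hyP.2 hyx
  have := hA y x
  rw [h1, h4] at this
  linarith
end

section
/- Let h_a, h_b, h_c : (0,∞) → ℝ satisfy h_a(x) + h_b(y) = h_c(x+y) + δ for l₂-almost all (x,y) ∈ (0,∞)², where δ ∈ ℝ. Suppose in addition h_a is semi-constant: h_a(2y) = h_a(y) for all y outside a Lebesgue nullset. Then there exist constants α, β ∈ ℝ such that h_a = α, h_b = β, and h_c = α + β − δ Lebesgue-almost everywhere on (0,∞). -/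
/-!
For a.e. `t > 0`, comparing the equation at `x = t` and `x = 2t` and using `h_a(2t) = h_a(t)`
shows `h_c(w + t) = h_c(w)` for a.e. `w > t`. Comparing it next at `x = a` and `x = b` with a
common `y` gives `h_a(b) = h_a(a)` whenever `b - a` is such a period, so `h_a` is a.e. equal to a
constant `α`. Then `h_c = α + h_b(y) - δ` a.e. on `(y, ∞)` for a.e. `y`; overlapping tails force
`h_b` to be a.e. constant, and tails `(y, ∞)` with `y → 0` give `h_c` on all of `(0, ∞)`.

No measurability of `h_a, h_b, h_c` is needed: slices are only taken through
`Measure.ae_ae_of_ae_prod`, which holds for arbitrary predicates.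
-/

open MeasureTheory Set Filter

lemma exists_mem_of_ae_imp {α : Type*} [MeasurableSpace α] {μ : Measure α} {s : Set α}
    {p : α → Prop} (hs : μ s ≠ 0) (h : ∀ᵐ x ∂μ, x ∈ s → p x) : ∃ x ∈ s, p x :=
  (Measure.exists_mem_of_measure_ne_zero_of_ae hs (ae_restrict_of_ae h)).imp
    fun _ ⟨hx, hp⟩ => ⟨hx, hp hx⟩

lemma exists_gt_of_ae_imp {p : ℝ → Prop} (c : ℝ) (h : ∀ᵐ x, c < x → p x) :
    ∃ x > c, p x :=
  exists_mem_of_ae_imp (s := Ioi c) (by simp) h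

lemma MeasureTheory.Measure.ae_ae_swap_of_ae_prod {α β : Type*} [MeasurableSpace α]
    [MeasurableSpace β] {μ : Measure α} {ν : Measure β} [SFinite μ] [SFinite ν]
    {p : α × β → Prop} (h : ∀ᵐ z ∂μ.prod ν, p z) : ∀ᵐ y ∂ν, ∀ᵐ x ∂μ, p (x, y) :=
  ae_ae_of_ae_prod (measurePreserving_swap.quasiMeasurePreserving.ae h)

lemma exists_ae_eq_const_of_eq_of_sub {f : ℝ → ℝ} {G T : ℝ → Prop}
    (hG : ∀ᵐ x, 0 < x → G x) (hT : ∀ᵐ t, 0 < t → T t)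
    (hf : ∀ a b, G a → G b → a < b → T (b - a) → f b = f a) :
    ∃ c, ∀ᵐ x, 0 < x → f x = c := by
  obtain ⟨x₀, -, hGx₀⟩ := exists_gt_of_ae_imp 0 hG
  have hT_up := (measurePreserving_sub_right volume x₀).quasiMeasurePreserving.ae hT
  have hT_down := (Measure.measurePreserving_sub_left volume x₀).quasiMeasurePreserving.ae hT
  refine ⟨f x₀, ?_⟩
  filter_upwards [hG, hT_up, hT_down] with x hGx hup hdown hx
  rcases lt_trichotomy x x₀ with hlt | rfl | hgt
  · exact (hf x x₀ (hGx hx) hGx₀ hlt (hdown (sub_pos.2 hlt))).symm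
  · rfl
  · exact hf x₀ x hGx₀ (hGx hx) hgt (hup (sub_pos.2 hgt))

lemma exists_ae_eq_const_of_ae_tail_eq {g F : ℝ → ℝ} {Y : ℝ → Prop}
    (hY : ∀ᵐ y, 0 < y → Y y) (hg : ∀ y, 0 < y → Y y → ∀ᵐ w, y < w → g w = F y) :
    ∃ c, (∀ y, 0 < y → Y y → F y = c) ∧ ∀ᵐ w, 0 < w → g w = c := by
  have hF : ∀ y y', 0 < y → Y y → 0 < y' → Y y' → F y = F y' := by
    intro y y' hy hYy hy' hYy'
    obtain ⟨w, -, hgy, hgy'⟩ := exists_gt_of_ae_imp (max y y')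
      (p := fun w => g w = F y ∧ g w = F y')
      (by filter_upwards [hg y hy hYy, hg y' hy' hYy'] with w h h' hw
          exact ⟨h (max_lt_iff.1 hw).1, h' (max_lt_iff.1 hw).2⟩)
    rw [← hgy, ← hgy']
  have hsmall : ∀ n : ℕ, ∃ y ∈ Ioo (0 : ℝ) (1 / (n + 1)), Y y := fun n =>
    exists_mem_of_ae_imp (μ := volume) (by simp [Nat.cast_add_one_pos])
      (by filter_upwards [hY] with y hy h using hy h.1)
  choose y hy hYy using hsmall
  refine ⟨F (y 0), fun y' hy' hYy' => hF y' (y 0) hy' hYy' (hy 0).1 (hYy 0), ?_⟩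
  have htails : ∀ᵐ w, ∀ n, y n < w → g w = F (y 0) := by
    refine ae_all_iff.2 fun n => ?_
    filter_upwards [hg (y n) (hy n).1 (hYy n)] with w hw hlt
    rw [hw hlt, hF _ _ (hy n).1 (hYy n) (hy 0).1 (hYy 0)]
  filter_upwards [htails] with w hw hw0
  obtain ⟨n, hn⟩ := exists_nat_one_div_lt hw0
  exact hw n ((hy n).2.trans hn)

section Pexider

variable {ha hb hc : ℝ → ℝ} {δ : ℝ}

lemma ae_add_eq_of_slices (t : ℝ)
    (h₁ : ∀ᵐ y, 0 < y → ha t + hb y = hc (t + y) + δ)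
    (h₂ : ∀ᵐ y, 0 < y → ha (2 * t) + hb y = hc (2 * t + y) + δ) (h : ha (2 * t) = ha t) :
    ∀ᵐ w, t < w → hc (w + t) = hc w := by
  filter_upwards [(measurePreserving_sub_right volume t).quasiMeasurePreserving.ae h₁,
    (measurePreserving_sub_right volume t).quasiMeasurePreserving.ae h₂] with w e₁ e₂ hw
  have e₁ := e₁ (sub_pos.2 hw)
  have e₂ := e₂ (sub_pos.2 hw)
  rw [add_sub_cancel] at e₁
  rw [show 2 * t + (w - t) = w + t by ring] at e₂
  linarith

lemma eq_of_slices_of_ae_add_eq {a b : ℝ}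
    (h₁ : ∀ᵐ y, 0 < y → ha a + hb y = hc (a + y) + δ)
    (h₂ : ∀ᵐ y, 0 < y → ha b + hb y = hc (b + y) + δ)
    (hper : ∀ᵐ w, b - a < w → hc (w + (b - a)) = hc w) : ha b = ha a := by
  have hper' := (measurePreserving_add_left volume a).quasiMeasurePreserving.ae hper
  obtain ⟨y, -, e₁, e₂, e₃⟩ := exists_gt_of_ae_imp (max 0 (b - 2 * a))
    (p := fun y => ha a + hb y = hc (a + y) + δ ∧ ha b + hb y = hc (b + y) + δ ∧
      hc (a + y + (b - a)) = hc (a + y))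
    (by filter_upwards [h₁, h₂, hper'] with y e₁ e₂ e₃ hy
        obtain ⟨hy₀, hy₁⟩ := max_lt_iff.1 hy
        exact ⟨e₁ hy₀, e₂ hy₀, e₃ (by linarith)⟩)
  rw [show a + y + (b - a) = b + y by ring] at e₃
  linarith

lemma ae_eq_of_slice_of_ae_eq_const {y α : ℝ}
    (hy : ∀ᵐ x, 0 < x → ha x + hb y = hc (x + y) + δ) (hα : ∀ᵐ x, 0 < x → ha x = α) :
    ∀ᵐ w, y < w → hc w = α + hb y - δ := by
  filter_upwards [(measurePreserving_sub_right volume y).quasiMeasurePreserving.ae hy,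
    (measurePreserving_sub_right volume y).quasiMeasurePreserving.ae hα] with w e₁ e₂ hw
  have e₁ := e₁ (sub_pos.2 hw)
  rw [sub_add_cancel] at e₁
  linarith [e₂ (sub_pos.2 hw)]

end Pexider

theorem stmt_10 (ha hb hc : ℝ → ℝ) (δ : ℝ)
    (M : Set (ℝ × ℝ)) (hM0 : volume M = 0)
    (heq : ∀ x y : ℝ, 0 < x → 0 < y → (x, y) ∉ M →
      ha x + hb y = hc (x + y) + δ)
    (E : Set ℝ) (hE0 : volume E = 0)
    (hsc : ∀ y : ℝ, 0 < y → y ∉ E → ha (2 * y) = ha y) :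
    ∃ α β : ℝ, ∀ᵐ x : ℝ ∂volume, x ∈ Ioi (0 : ℝ) →
      ha x = α ∧ hb x = β ∧ hc x = α + β - δ := by
  have hprod : ∀ᵐ p : ℝ × ℝ ∂volume.prod volume, 0 < p.1 → 0 < p.2 →
      ha p.1 + hb p.2 = hc (p.1 + p.2) + δ := by
    filter_upwards [measure_eq_zero_iff_ae_notMem.1 hM0] with p hp hx hy using heq _ _ hx hy hp
  set S : ℝ → Prop := fun x => ∀ᵐ y, 0 < y → ha x + hb y = hc (x + y) + δ
  have hS : ∀ᵐ x, 0 < x → S x := by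
    filter_upwards [Measure.ae_ae_of_ae_prod hprod] with x hx h using hx.mono fun y hy => hy h
  have hS₂ : ∀ᵐ t : ℝ, 0 < t → S (2 * t) := by
    filter_upwards [(Measure.quasiMeasurePreserving_smul volume two_ne_zero).ae hS] with t ht h
    exact ht (by simpa using h)
  obtain ⟨α, hα⟩ := exists_ae_eq_const_of_eq_of_sub (f := ha) hS
    (T := fun t => S t ∧ S (2 * t) ∧ ha (2 * t) = ha t)
    (by filter_upwards [hS, hS₂, measure_eq_zero_iff_ae_notMem.1 hE0] with t h₁ h₂ hE ht using
          ⟨h₁ ht, h₂ ht, hsc t ht hE⟩)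
    fun a b hSa hSb _ ⟨h₁, h₂, h⟩ =>
      eq_of_slices_of_ae_add_eq hSa hSb (ae_add_eq_of_slices _ h₁ h₂ h)
  have hY : ∀ᵐ y, 0 < y → ∀ᵐ x, 0 < x → ha x + hb y = hc (x + y) + δ := by
    filter_upwards [Measure.ae_ae_swap_of_ae_prod hprod] with y hy h using
      hy.mono fun x hx h' => hx h' h
  obtain ⟨γ, hb_eq, hc_eq⟩ := exists_ae_eq_const_of_ae_tail_eq (g := hc)
    (F := fun y => α + hb y - δ) hY fun y _ hy => ae_eq_of_slice_of_ae_eq_const hy hα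
  refine ⟨α, γ - α + δ, ?_⟩
  filter_upwards [hα, hc_eq, hY] with x hαx hγx hYx hx
  exact ⟨hαx hx, by linarith [hb_eq x hx (hYx hx)], by rw [hγx hx]; ring⟩
end

section
/- If a, b, c, d : (0,∞) → ℝ satisfy the additive Olkin–Baker equation a(x) + b(y) = c(x+y) + d(x/y) for all (x,y) outside a nullset M, then for every r > 0, the difference functions a_r(x) = a(rx) − a(x), b_r(y) = b(ry) − b(y), c_r(z) = c(rz) − c(z) satisfy the Pexider equation a_r(x) + b_r(y) = c_r(x+y) for all (x,y) ∈ (0,∞)² outside the nullset M ∪ (1/r)M. -/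
open MeasureTheory Set

theorem stmt_11 (a b c d : ℝ → ℝ)
    (M : Set (ℝ × ℝ)) (hM0 : volume M = 0)
    (heq : ∀ x y : ℝ, 0 < x → 0 < y → (x, y) ∉ M →
      a x + b y = c (x + y) + d (x / y)) :
    ∀ r : ℝ, 0 < r → ∀ x y : ℝ, 0 < x → 0 < y →
      (x, y) ∉ M ∪ {p : ℝ × ℝ | (r * p.1, r * p.2) ∈ M} →
      (a (r * x) - a x) + (b (r * y) - b y) = c (r * (x + y)) - c (x + y) := by
  intro r hr x y hx hy hM
  rw [Set.mem_union] at hM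
  push_neg at hM
  obtain ⟨h1, h2⟩ := hM
  have e1 := heq x y hx hy h1
  have e2 := heq (r * x) (r * y) (by positivity) (by positivity) h2
  have hdiv : r * x / (r * y) = x / y := by
    field_simp
  rw [hdiv] at e2
  have : r * x + r * y = r * (x + y) := by ring
  rw [this] at e2
  linarith
end

section
/- Let G : (0,∞) → ℝ be Borel measurable and bounded in modulus after composing with t ↦ e^{itG}; suppose for every x > 0, ∫₀¹ e^{itG(xy)} dy = ∫₀¹ e^{itG(y)} dy for all t ∈ ℝ. Then for each t ∈ ℝ, e^{itG(u)} equals the constant w(t) = ∫₀¹ e^{itG(y)} dy for Lebesgue-almost every u ∈ (0,∞). -/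
/-! The substitution `u = x y` turns the scaling invariance into `∫₀ˣ e^{itG} = x w(t)` for every
`x > 0`, so every interval `(a, b] ⊆ (0, ∞)` carries the integral `(b - a) w(t)`. Hence the
averages of `e^{itG}` over small balls around a point of `(0, ∞)` are all equal to `w(t)`, while by
the Lebesgue differentiation theorem they converge to `e^{itG(x)}` for almost every `x`. -/

open MeasureTheory Set Complex Filter Topology

section
variable {E : Type*} [NormedAddCommGroup E] [NormedSpace ℝ E]

theorem setIntegral_Ioc_zero_one_comp_mul_left (f : ℝ → E) {x : ℝ} (hx : 0 < x) :
    ∫ y in Ioc (0 : ℝ) 1, f (x * y) = x⁻¹ • ∫ u in Ioc 0 x, f u := by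
  rw [← integral_indicator measurableSet_Ioc, ← integral_indicator measurableSet_Ioc,
    ← abs_of_pos (inv_pos.mpr hx), ← Measure.integral_comp_mul_left]
  congr 1 with y
  rw [← indicator_comp_right, preimage_const_mul_Ioc₀ _ _ hx, zero_div, div_self hx.ne']
  rfl

theorem setIntegral_Ioc_eq_of_setIntegral_Ioc_zero {f : ℝ → E} {c : E}
    (hf : LocallyIntegrable f) (h : ∀ x, 0 < x → ∫ u in Ioc 0 x, f u = x • c)
    {a b : ℝ} (ha : 0 < a) (hab : a ≤ b) : ∫ u in Ioc a b, f u = (b - a) • c := by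
  have hint (p q : ℝ) : IntervalIntegrable f volume p q :=
    (hf.integrableOn_isCompact isCompact_uIcc).intervalIntegrable
  have hsub := intervalIntegral.integral_interval_sub_left (hint 0 b) (hint 0 a)
  rw [intervalIntegral.integral_of_le (ha.le.trans hab), intervalIntegral.integral_of_le ha.le,
    intervalIntegral.integral_of_le hab, h b (ha.trans_le hab), h a ha] at hsub
  rw [← hsub, sub_smul]

theorem ae_eq_const_of_setIntegral_Ioc_eq [CompleteSpace E] {f : ℝ → E} {c : E} {s : Set ℝ}
    (hs : IsOpen s) (hf : LocallyIntegrable f)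
    (h : ∀ a b, a < b → Icc a b ⊆ s → ∫ u in Ioc a b, f u = (b - a) • c) :
    ∀ᵐ x, x ∈ s → f x = c := by
  filter_upwards [IsUnifLocDoublingMeasure.ae_tendsto_average volume hf 1] with x hx hxs
  have hf_avg : Tendsto (fun δ => ⨍ y in Metric.closedBall x δ, f y) (𝓝[>] 0) (𝓝 (f x)) :=
    hx (fun _ => x) id tendsto_id <| eventually_mem_nhdsWithin.mono fun δ hδ => by
      simpa using le_of_lt hδ
  obtain ⟨ε, hε, hball⟩ := Metric.isOpen_iff.mp hs x hxs
  have hc_avg : (fun δ => ⨍ y in Metric.closedBall x δ, f y) =ᶠ[𝓝[>] 0] fun _ => c := by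
    filter_upwards [Ioo_mem_nhdsGT hε] with δ ⟨hδ, hδε⟩
    have hsub : Icc (x - δ) (x + δ) ⊆ s := by
      rw [← Real.closedBall_eq_Icc]
      exact (Metric.closedBall_subset_ball hδε).trans hball
    rw [Real.closedBall_eq_Icc, setAverage_eq, integral_Icc_eq_integral_Ioc,
      h _ _ (by linarith) hsub, measureReal_def, Real.volume_Icc,
      ENNReal.toReal_ofReal (by linarith), smul_smul, inv_mul_cancel₀ (by linarith), one_smul]
  exact tendsto_nhds_unique hf_avg (tendsto_const_nhds.congr' hc_avg.symm)

end

theorem stmt_12 (G : ℝ → ℝ) (hG : Measurable G)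
    (h : ∀ x : ℝ, 0 < x → ∀ t : ℝ,
      ∫ y in Ioc (0 : ℝ) 1, Complex.exp (Complex.I * t * G (x * y)) =
        ∫ y in Ioc (0 : ℝ) 1, Complex.exp (Complex.I * t * G y)) :
    ∀ t : ℝ, ∀ᵐ u : ℝ ∂volume, u ∈ Ioi (0 : ℝ) →
      Complex.exp (Complex.I * t * G u) =
        ∫ y in Ioc (0 : ℝ) 1, Complex.exp (Complex.I * t * G y) := by
  intro t
  set g : ℝ → ℂ := fun u => Complex.exp (Complex.I * t * G u)
  have hg_loc : LocallyIntegrable g := by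
    refine (memLp_top_of_bound (by fun_prop) 1 (ae_of_all _ fun u => ?_)).locallyIntegrable le_top
    rw [show g u = exp (↑(t * G u) * I) by simp only [g]; push_cast; ring_nf, norm_exp_ofReal_mul_I]
  have h_Ioc_zero (x : ℝ) (hx : 0 < x) : ∫ u in Ioc 0 x, g u = x • ∫ y in Ioc (0 : ℝ) 1, g y := by
    rw [← h x hx t, setIntegral_Ioc_zero_one_comp_mul_left g hx, smul_inv_smul₀ hx.ne']
  refine ae_eq_const_of_setIntegral_Ioc_eq isOpen_Ioi hg_loc fun a b hab hsub => ?_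
  exact setIntegral_Ioc_eq_of_setIntegral_Ioc_zero hg_loc h_Ioc_zero
    (hsub (left_mem_Icc.mpr hab.le)) hab.le
end

section
/- Let w : ℝ → ℂ and G : (0,∞) → ℝ satisfy: for every t ∈ ℝ there is a Lebesgue nullset E_t ⊆ (0,∞) with e^{i t G(u)} = w(t) for all u ∉ E_t. Then there exists κ ∈ ℝ such that w(t) = e^{iκt} for all t ∈ ℝ, and G(u) = κ for Lebesgue-almost all u ∈ (0,∞). -/
/-!
Fix a point `u₀` that is good for `t = 1` and `t = √2`, and put `κ = G u₀`. For almost every `u`,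
`G u - κ` and `√2 (G u - κ)` both lie in `2πℤ`; since `√2` is irrational this forces `G u = κ`.
Evaluating the hypothesis at a point that is good for `t` and has `G u = κ` gives `w t = e^{iκt}`.
-/

open MeasureTheory Set Complex

theorem exists_int_sub_eq_of_exp_mul_I_eq {a b : ℝ} (h : exp (a * I) = exp (b * I)) :
    ∃ n : ℤ, a - b = n * (2 * Real.pi) := by
  obtain ⟨n, hn⟩ := Circle.exp_eq_exp.mp (Subtype.ext (by simpa only [Circle.coe_exp] using h))
  exact ⟨n, by linarith⟩

theorem eq_of_exp_mul_I_eq_of_irrational {r a b : ℝ} (hr : Irrational r)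
    (h₁ : exp (a * I) = exp (b * I)) (h₂ : exp ((r * a : ℝ) * I) = exp ((r * b : ℝ) * I)) :
    a = b := by
  obtain ⟨n, hn⟩ := exists_int_sub_eq_of_exp_mul_I_eq h₁
  obtain ⟨m, hm⟩ := exists_int_sub_eq_of_exp_mul_I_eq h₂
  by_contra hab
  have hn0 : n ≠ 0 := by
    rintro rfl
    exact hab (sub_eq_zero.mp (by simpa using hn))
  refine (hr.mul_intCast hn0).ne_int m (mul_right_cancel₀ Real.two_pi_pos.ne' ?_)
  calc r * n * (2 * Real.pi) = r * a - r * b := by rw [mul_assoc, ← hn]; ring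
    _ = m * (2 * Real.pi) := hm

theorem exists_forall_exp_eq_and_ae_eq_of_ae_exp_eq {α : Type*} [MeasurableSpace α]
    {μ : Measure α} [NeZero μ] {g : α → ℝ} {w : ℝ → ℂ}
    (h : ∀ t : ℝ, ∀ᵐ u ∂μ, exp (I * t * g u) = w t) :
    ∃ κ : ℝ, (∀ t : ℝ, w t = exp (I * κ * t)) ∧ ∀ᵐ u ∂μ, g u = κ := by
  obtain ⟨u₀, hu₀⟩ := ((h 1).and (h √2)).exists
  have hae : ∀ᵐ u ∂μ, g u = g u₀ := by
    filter_upwards [h 1, h √2] with u h₁ h₂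
    refine eq_of_exp_mul_I_eq_of_irrational irrational_sqrt_two ?_ ?_
    · simpa [mul_comm] using h₁.trans hu₀.1.symm
    · push_cast
      simpa [mul_comm, mul_left_comm] using h₂.trans hu₀.2.symm
  refine ⟨g u₀, fun t ↦ ?_, hae⟩
  obtain ⟨u, hu, hgu⟩ := ((h t).and hae).exists
  rw [← hu, hgu, mul_right_comm]

theorem stmt_13_general (G : ℝ → ℝ) (w : ℝ → ℂ)
    (h : ∀ t : ℝ, ∃ E : Set ℝ, volume E = 0 ∧
      ∀ u : ℝ, 0 < u → u ∉ E → Complex.exp (Complex.I * t * G u) = w t) :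
    ∃ κ : ℝ, (∀ t : ℝ, w t = Complex.exp (Complex.I * κ * t)) ∧
      ∀ᵐ u : ℝ ∂volume, u ∈ Ioi (0 : ℝ) → G u = κ := by
  have : NeZero (volume.restrict (Ioi (0 : ℝ))) := ⟨by simp [Measure.restrict_eq_zero]⟩
  have hrestr (t : ℝ) : ∀ᵐ u ∂volume.restrict (Ioi 0), exp (I * t * G u) = w t := by
    obtain ⟨E, hE, hEw⟩ := h t
    rw [ae_restrict_iff' measurableSet_Ioi]
    filter_upwards [measure_eq_zero_iff_ae_notMem.mp hE] with u huE hu using hEw u hu huE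
  obtain ⟨κ, hw, hG⟩ := exists_forall_exp_eq_and_ae_eq_of_ae_exp_eq hrestr
  exact ⟨κ, hw, (ae_restrict_iff' measurableSet_Ioi).mp hG⟩

theorem stmt_13 (G : ℝ → ℝ) (hG : Measurable G) (w : ℝ → ℂ)
    (h : ∀ t : ℝ, ∃ E : Set ℝ, volume E = 0 ∧
      ∀ u : ℝ, 0 < u → u ∉ E → Complex.exp (Complex.I * t * G u) = w t) :
    ∃ κ : ℝ, (∀ t : ℝ, w t = Complex.exp (Complex.I * κ * t)) ∧
      ∀ᵐ u : ℝ ∂volume, u ∈ Ioi (0 : ℝ) → G u = κ :=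
  stmt_13_general G w h
end
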